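/- arXiv:2412.04853 — 2 statements merged into one kernel-verified Lean document; each statement's English description precedes it below -/
import Mathlib

section
/- In a tree T, where d is the shortest-path distance and diam(T) the diameter, for every vertex v_i there is a vertex v_j with d(v_i, v_j) = max_{u} d(v_i, u) such that v_j is an endpoint of some diametral path of T, i.e. there is a vertex w with d(v_j, w) = diam(T). -/
namespace TreeBfsAux

open SimpleGraph Walk

variable {V : Type*} {T : SimpleGraph V}

/-- In a tree, any path realizes the distance. -/
lemma path_length_eq_dist (hT : T.IsTree) {u v : V} (p : T.Walk u v) (hp : p.IsPath) :
    p.length = T.dist u v := by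
  obtain ⟨q, hq, hql⟩ := hT.isConnected.exists_path_of_dist u v
  obtain ⟨r, -, hr⟩ := hT.existsUnique_path u v
  rw [hr p hp, ← hr q hq]
  exact hql

/-- In a tree, distances add along a path. -/
lemma dist_add_of_mem_support (hT : T.IsTree) {u v w : V} (p : T.Walk u v) (hp : p.IsPath)
    (hw : w ∈ p.support) : T.dist u v = T.dist u w + T.dist w v := by
  classical
  rw [← path_length_eq_dist hT p hp, ← path_length_eq_dist hT _ (hp.takeUntil hw),
    ← path_length_eq_dist hT _ (hp.dropUntil hw), ← length_append, take_spec]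

lemma isPath_append {u x w : V} {p : T.Walk u x} {q : T.Walk x w} (hp : p.IsPath)
    (hq : q.IsPath) (h : ∀ z ∈ p.support, z ∈ q.support → z = x) :
    (p.append q).IsPath := by
  rw [isPath_def, support_append]
  refine List.Nodup.append hp.support_nodup (hq.support_nodup.sublist (List.tail_sublist _)) ?_
  intro z hz hz'
  have hzx : z = x := h z hz (List.mem_of_mem_tail hz')
  rw [hzx] at hz'
  have heq : q.support = x :: q.support.tail := support_eq_cons q
  have hnd := hq.support_nodup
  rw [heq, List.nodup_cons] at hnd
  exact hnd.1 hz'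

/-- First vertex of a path from `c` hitting the support of a walk `p`. -/
lemma exists_first_hit {a b : V} (p : T.Walk a b) :
    ∀ {c : V} (r : T.Walk c a), r.IsPath →
      ∃ m, m ∈ p.support ∧ ∃ q : T.Walk c m, q.IsPath ∧ q.support ⊆ r.support ∧
        (∀ z ∈ q.support, z ∈ p.support → z = m)
  | _, Walk.nil, _ =>
      ⟨a, p.start_mem_support, Walk.nil, IsPath.nil, by simp, by simp⟩
  | c, Walk.cons h r', hr => by
      classical
      by_cases hc : c ∈ p.support
      · exact ⟨c, hc, Walk.nil, IsPath.nil, by simp, by simp⟩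
      · obtain ⟨m, hm, q, hq, hqs, hqm⟩ := exists_first_hit p r' hr.of_cons
        refine ⟨m, hm, Walk.cons h q, ?_, ?_, ?_⟩
        · refine hq.cons fun hcq => ?_
          have hcr : c ∈ r'.support := hqs hcq
          exact ((cons_isPath_iff h r').mp hr).2 hcr
        · intro z hz
          rw [support_cons, List.mem_cons] at hz
          rw [support_cons]
          rcases hz with rfl | hz
          · exact List.mem_cons_self
          · exact List.mem_cons_of_mem _ (hqs hz)
        · intro z hz hzp
          rw [support_cons, List.mem_cons] at hz
          rcases hz with rfl | hz
          · exact absurd hzp hc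
          · exact hqm z hz hzp

/-- Median point of a triple `a, b, c` lying on a given path from `a` to `b`. -/
lemma exists_median (hT : T.IsTree) {a b : V} (c : V) (p : T.Walk a b) (hp : p.IsPath) :
    ∃ m ∈ p.support, T.dist a b = T.dist a m + T.dist m b ∧
      T.dist c a = T.dist c m + T.dist m a ∧ T.dist c b = T.dist c m + T.dist m b := by
  classical
  obtain ⟨r, hr, -⟩ := hT.isConnected.exists_path_of_dist c a
  obtain ⟨m, hm, q, hq, -, hqm⟩ := exists_first_hit p r hr
  refine ⟨m, hm, dist_add_of_mem_support hT p hp hm, ?_, ?_⟩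
  · have htp : (p.takeUntil m hm).IsPath := hp.takeUntil hm
    have hpath : (q.append (p.takeUntil m hm).reverse).IsPath := by
      refine isPath_append hq htp.reverse fun z hz hz' => ?_
      exact hqm z hz (support_takeUntil_subset p hm (by simpa using hz'))
    have hlen := path_length_eq_dist hT _ hpath
    rw [length_append, length_reverse, path_length_eq_dist hT q hq,
      path_length_eq_dist hT _ htp] at hlen
    have hcm : T.dist a m = T.dist m a := SimpleGraph.dist_comm
    omega
  · have hdp : (p.dropUntil m hm).IsPath := hp.dropUntil hm
    have hpath : (q.append (p.dropUntil m hm)).IsPath := by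
      refine isPath_append hq hdp fun z hz hz' => ?_
      exact hqm z hz (support_dropUntil_subset p hm hz')
    have hlen := path_length_eq_dist hT _ hpath
    rw [length_append, path_length_eq_dist hT q hq, path_length_eq_dist hT _ hdp] at hlen
    omega

/-- Betweenness on a path: for two support vertices, one is between `a` and the other. -/
lemma betweenness (hT : T.IsTree) {a b m₁ m₂ : V} (p : T.Walk a b) (hp : p.IsPath)
    (h₁ : m₁ ∈ p.support) (h₂ : m₂ ∈ p.support) :
    T.dist a b = T.dist a m₁ + T.dist m₁ m₂ + T.dist m₂ b ∨
    T.dist a b = T.dist a m₂ + T.dist m₂ m₁ + T.dist m₁ b := by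
  classical
  have hps : p.support = (p.takeUntil m₂ h₂).support ++ (p.dropUntil m₂ h₂).support.tail := by
    rw [← support_append, take_spec]
  have hab := dist_add_of_mem_support hT p hp h₂
  rw [hps, List.mem_append] at h₁
  rcases h₁ with h | h
  · left
    have := dist_add_of_mem_support hT _ (hp.takeUntil h₂) h
    omega
  · right
    have := dist_add_of_mem_support hT _ (hp.dropUntil h₂) (List.mem_of_mem_tail h)
    omega

/-- Four-point condition in a tree. -/
lemma four_point (hT : T.IsTree) (a b c d : V) :
    T.dist a b + T.dist c d ≤ T.dist a c + T.dist b d ∨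
    T.dist a b + T.dist c d ≤ T.dist a d + T.dist b c := by
  obtain ⟨p, hp, -⟩ := hT.isConnected.exists_path_of_dist a b
  obtain ⟨m₁, hm₁, hab₁, hca₁, hcb₁⟩ := exists_median hT c p hp
  obtain ⟨m₂, hm₂, hab₂, hda₂, hdb₂⟩ := exists_median hT d p hp
  rcases betweenness hT p hp hm₁ hm₂ with hbet | hbet
  · right
    have c1 : T.dist c b = T.dist b c := SimpleGraph.dist_comm
    have c2 : T.dist d a = T.dist a d := SimpleGraph.dist_comm
    have c3 : T.dist m₂ a = T.dist a m₂ := SimpleGraph.dist_comm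
    have c4 : T.dist m₂ d = T.dist d m₂ := SimpleGraph.dist_comm
    have t1 : T.dist c d ≤ T.dist c m₂ + T.dist m₂ d := hT.isConnected.dist_triangle
    have t2 : T.dist c m₂ ≤ T.dist c m₁ + T.dist m₁ m₂ := hT.isConnected.dist_triangle
    omega
  · left
    have c1 : T.dist c a = T.dist a c := SimpleGraph.dist_comm
    have c2 : T.dist d b = T.dist b d := SimpleGraph.dist_comm
    have c3 : T.dist m₁ a = T.dist a m₁ := SimpleGraph.dist_comm
    have c4 : T.dist m₁ m₂ = T.dist m₂ m₁ := SimpleGraph.dist_comm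
    have c5 : T.dist m₂ d = T.dist d m₂ := SimpleGraph.dist_comm
    have t1 : T.dist c d ≤ T.dist c m₁ + T.dist m₁ d := hT.isConnected.dist_triangle
    have t2 : T.dist m₁ d ≤ T.dist m₁ m₂ + T.dist m₂ d := hT.isConnected.dist_triangle
    omega

end TreeBfsAux

/-- In a finite tree, for every vertex `v_i` there is a vertex `v_j` farthest
from `v_i` that is an endpoint of some diametral path. -/
theorem stmt6 {V : Type*} [Fintype V] (T : SimpleGraph V) (hT : T.IsTree)
    (v_i : V) :
    ∃ v_j : V, (∀ u : V, T.dist v_i u ≤ T.dist v_i v_j) ∧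
      ∃ w : V, ∀ a b : V, T.dist a b ≤ T.dist v_j w := by
  classical
  have hne : (Finset.univ : Finset V).Nonempty := ⟨v_i, Finset.mem_univ _⟩
  obtain ⟨x, -, hx⟩ := Finset.exists_max_image Finset.univ (fun u => T.dist v_i u) hne
  obtain ⟨w, -, hw⟩ := Finset.exists_max_image Finset.univ (fun u => T.dist x u) hne
  refine ⟨x, fun u => hx u (Finset.mem_univ u), w, fun a b => ?_⟩
  rcases TreeBfsAux.four_point hT a b v_i x with h | h
  · have c1 : T.dist a v_i = T.dist v_i a := SimpleGraph.dist_comm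
    have c2 : T.dist b x = T.dist x b := SimpleGraph.dist_comm
    have h1 : T.dist v_i a ≤ T.dist v_i x := hx a (Finset.mem_univ a)
    have h2 : T.dist x b ≤ T.dist x w := hw b (Finset.mem_univ b)
    omega
  · have c1 : T.dist b v_i = T.dist v_i b := SimpleGraph.dist_comm
    have c2 : T.dist a x = T.dist x a := SimpleGraph.dist_comm
    have h1 : T.dist v_i b ≤ T.dist v_i x := hx b (Finset.mem_univ b)
    have h2 : T.dist x a ≤ T.dist x w := hw a (Finset.mem_univ a)
    omega
end

section
/- Let F be a finite family of subsets of a finite universe, and let k' ≤ k be positive integers. Then OPT_{k'} ≥ (k'/k)·OPT_k, where OPT_j denotes the maximum cardinality of the union of at most j sets from F. -/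
/-- Selection lemma: from any finite family with nonnegative weights one can pick
`k` elements carrying at least a `k / card` fraction of the total weight. -/
lemma select_aux {β : Type*} [DecidableEq β] (w : β → ℝ) (hw : ∀ b, 0 ≤ w b) :
    ∀ (k : ℕ) (s : Finset β), k ≤ s.card →
      ∃ t ⊆ s, t.card = k ∧ (k : ℝ) * ∑ g ∈ s, w g ≤ (s.card : ℝ) * ∑ g ∈ t, w g := by
  intro k
  induction k with
  | zero =>
      intro s _
      exact ⟨∅, Finset.empty_subset s, rfl, by simp⟩
  | succ k ih =>
      intro s hks
      have hs : s.Nonempty := Finset.card_pos.mp (lt_of_lt_of_le (Nat.succ_pos k) hks)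
      obtain ⟨g, hg, hmax⟩ := s.exists_max_image w hs
      have hcard : (s.erase g).card = s.card - 1 := Finset.card_erase_of_mem hg
      have hm1 : 1 ≤ s.card := hs.card_pos
      have hk' : k ≤ (s.erase g).card := by omega
      obtain ⟨t, hts, htc, hT⟩ := ih (s.erase g) hk'
      refine ⟨insert g t, ?_, ?_, ?_⟩
      · exact Finset.insert_subset hg (hts.trans (s.erase_subset g))
      · have : g ∉ t := fun h => (Finset.mem_erase.mp (hts h)).1 rfl
        rw [Finset.card_insert_of_notMem this, htc]
      · have hgt : g ∉ t := fun h => (Finset.mem_erase.mp (hts h)).1 rfl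
        rw [Finset.sum_insert hgt]
        have hsum : w g + ∑ x ∈ s.erase g, w x = ∑ x ∈ s, w x :=
          Finset.add_sum_erase s w hg
        set m : ℝ := (s.card : ℝ) with hm
        have hmcast : ((s.erase g).card : ℝ) = m - 1 := by
          rw [hcard, Nat.cast_sub hm1, Nat.cast_one]
        rw [hmcast] at hT
        have hS' : ∑ x ∈ s.erase g, w x ≤ (m - 1) * w g := by
          calc ∑ x ∈ s.erase g, w x ≤ ∑ _x ∈ s.erase g, w g :=
                Finset.sum_le_sum (fun x hx => hmax x ((s.erase_subset g) hx))
            _ = (m - 1) * w g := by rw [Finset.sum_const, nsmul_eq_mul, hmcast]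
        have hT0 : 0 ≤ ∑ x ∈ t, w x := Finset.sum_nonneg (fun x _ => hw x)
        have hS0 : 0 ≤ ∑ x ∈ s.erase g, w x := Finset.sum_nonneg (fun x _ => hw x)
        have hwg0 : 0 ≤ w g := hw g
        have hkm : (k : ℝ) + 1 ≤ m := by
          rw [hm]; exact_mod_cast hks
        rw [← hsum]
        push_cast
        nlinarith [mul_le_mul_of_nonneg_left hT (le_trans (by linarith) hkm),
          mul_le_mul_of_nonneg_left hS' (sub_nonneg.mpr (by linarith : (k : ℝ) ≤ m - 1)),
          mul_nonneg (sub_nonneg.mpr hkm) hwg0]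

/-- Scaling property of maximum coverage: `OPT_{k'} ≥ (k'/k) · OPT_k`. -/
theorem stmt13 {α : Type*} [DecidableEq α]
    (F : Finset (Finset α)) (k' k : ℕ) (hk' : 0 < k') (hle : k' ≤ k) :
    ∀ G ⊆ F, G.card ≤ k →
      ∃ G' ⊆ F, G'.card ≤ k' ∧
        ((k' : ℝ) / (k : ℝ)) * ((G.biUnion id).card : ℝ) ≤
          ((G'.biUnion id).card : ℝ) := by
  intro G hGF hGk
  have hk0 : (0 : ℝ) < k := by exact_mod_cast lt_of_lt_of_le hk' hle
  by_cases hcase : G.card ≤ k'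
  · refine ⟨G, hGF, hcase, ?_⟩
    have h1 : (k' : ℝ) / k ≤ 1 := by
      rw [div_le_one hk0]; exact_mod_cast hle
    nlinarith [(Nat.cast_nonneg (G.biUnion id).card : (0:ℝ) ≤ ((G.biUnion id).card : ℝ))]
  · push_neg at hcase
    set U := G.biUnion id with hU
    -- assignment of each covered element to a covering set
    classical
    have hex : ∀ x ∈ U, ∃ g ∈ G, x ∈ g := by
      intro x hx
      simpa using Finset.mem_biUnion.mp hx
    choose! f hf1 hf2 using hex
    -- weights: fiber sizes
    set w : Finset α → ℝ := fun g => ((U.filter (fun x => f x = g)).card : ℝ) with hw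
    have hw0 : ∀ g, 0 ≤ w g := fun g => Nat.cast_nonneg _
    have htotal : ∑ g ∈ G, w g = (U.card : ℝ) := by
      rw [hw]
      rw [← Nat.cast_sum _ (fun g => (U.filter (fun x => f x = g)).card)]
      congr 1
      exact (Finset.card_eq_sum_card_fiberwise hf1).symm
    obtain ⟨t, htG, htc, hsel⟩ := select_aux w hw0 k' G (le_of_lt hcase)
    refine ⟨t, htG.trans hGF, le_of_eq htc, ?_⟩
    -- fibers of sets in t are disjoint subsets of the union of t
    have hfib : ∑ g ∈ t, w g ≤ ((t.biUnion id).card : ℝ) := by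
      have hdisj : (t : Set (Finset α)).PairwiseDisjoint
          (fun g => U.filter (fun x => f x = g)) := by
        intro a _ b _ hab
        simp only [Finset.disjoint_left, Finset.mem_filter]
        rintro x ⟨_, rfl⟩ ⟨_, h⟩
        exact hab h
      have hcardeq : (t.biUnion (fun g => U.filter (fun x => f x = g))).card
          = ∑ g ∈ t, (U.filter (fun x => f x = g)).card :=
        Finset.card_biUnion (fun a ha b hb hab => hdisj ha hb hab)
      have hsub : t.biUnion (fun g => U.filter (fun x => f x = g)) ⊆ t.biUnion id := by
        intro x hx
        obtain ⟨g, hgt, hxg⟩ := Finset.mem_biUnion.mp hx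
        obtain ⟨hxU, hfx⟩ := Finset.mem_filter.mp hxg
        exact Finset.mem_biUnion.mpr ⟨g, hgt, by simpa [hfx] using hf2 x hxU⟩
      calc ∑ g ∈ t, w g = ((t.biUnion (fun g => U.filter (fun x => f x = g))).card : ℝ) := by
            rw [hcardeq]; push_cast [hw]; rfl
        _ ≤ ((t.biUnion id).card : ℝ) := by exact_mod_cast Finset.card_le_card hsub
    -- put everything together
    have hGc : (G.card : ℝ) ≤ (k : ℝ) := by exact_mod_cast hGk
    have hGc0 : (0 : ℝ) < G.card := by
      have : 0 < G.card := lt_trans hk' hcase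
      exact_mod_cast this
    rw [div_mul_eq_mul_div, div_le_iff₀ hk0]
    have h1 : (k' : ℝ) * (U.card : ℝ) ≤ (G.card : ℝ) * ∑ g ∈ t, w g := by
      rw [← htotal]; exact hsel
    have h2 : (G.card : ℝ) * ∑ g ∈ t, w g ≤ (k : ℝ) * ((t.biUnion id).card : ℝ) :=
      mul_le_mul hGc hfib (Finset.sum_nonneg fun g _ => hw0 g) (le_of_lt hk0)
    calc (k' : ℝ) * (U.card : ℝ) ≤ (G.card : ℝ) * ∑ g ∈ t, w g := h1
      _ ≤ (k : ℝ) * ((t.biUnion id).card : ℝ) := h2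
      _ = ((t.biUnion id).card : ℝ) * k := mul_comm _ _
end
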